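/- Let p be an odd prime, α_p = exp(2πi/p), X and Z the p×p Heisenberg–Weyl matrices, and P_p the control-phase unitary on ℂ^p ⊗ ℂ^p determined by P_p(|s⟩ ⊗ |t⟩) = α_p^{st} |s⟩ ⊗ |t⟩. Then for all integers α, β, n, θ there exists c ∈ ℂ with |c| = 1 such that P_p^{θn} (X^α ⊗ X^β Z^{2βn}) P_p^{−θn} = c · (X^α Z^{βθn}) ⊗ (X^β Z^{2βn + αθn}), where all exponents of X and Z are taken mod p. -/

import Mathlib

open Kronecker

/-- `α_p = exp(2πi/p)`, the `p`-th root of unity. -/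
noncomputable def rootOfUnity (p : ℕ) : ℂ := Complex.exp (2 * Real.pi * Complex.I / p)

/-- The cyclic shift `X`, with `X|s⟩ = |s+1 mod p⟩`. -/
def Xmat (p : ℕ) : Matrix (Fin p) (Fin p) ℂ :=
  fun t s => if (t : ZMod p) = (s : ZMod p) + 1 then 1 else 0

/-- The clock matrix `Z = diag(1, α_p, α_p², …, α_p^{p−1})`. -/
noncomputable def Zmat (p : ℕ) : Matrix (Fin p) (Fin p) ℂ :=
  Matrix.diagonal fun s : Fin p => rootOfUnity p ^ (s : ℕ)

/-- The control-phase `P_p`, the diagonal unitary with `P_p(|s⟩⊗|t⟩) = α_p^{st}|s⟩⊗|t⟩`. -/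
noncomputable def cphase (p : ℕ) : Matrix (Fin p × Fin p) (Fin p × Fin p) ℂ :=
  Matrix.diagonal fun st : Fin p × Fin p => rootOfUnity p ^ ((st.1 : ℕ) * (st.2 : ℕ))

/-!
`cphase p ^ m` is diagonal with entries `α_p ^ (m s t)`, and `X^a ⊗ X^b Z^c` is monomial,
sending `|s₁, s₂⟩` to a multiple of `|s₁ + a, s₂ + b⟩`. Conjugation therefore multiplies that
entry by `α_p ^ (m ((s₁ + a)(s₂ + b) - s₁ s₂)) = α_p ^ (m a b) · α_p ^ (b m s₁) · α_p ^ (a m s₂)`: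
a global phase times `Z^(bm) ⊗ Z^(am)` on the right. Writing `α_p ^ j` as the standard additive
character of `ZMod p` evaluated at `j` makes all exponents reduce mod `p` automatically.
-/

open Matrix

variable {p : ℕ} [NeZero p]

lemma rootOfUnity_pow (j : ℕ) : rootOfUnity p ^ j = ZMod.stdAddChar (j : ZMod p) := by
  rw [← Int.cast_natCast, ZMod.stdAddChar_coe, rootOfUnity, ← Complex.exp_nat_mul]
  congr 1
  push_cast
  ring

lemma norm_stdAddChar {N : ℕ} [NeZero N] (x : ZMod N) : ‖ZMod.stdAddChar x‖ = 1 :=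
  Circle.norm_coe _

variable (p) in
def finEquivZMod : Fin p ≃ ZMod p where
  toFun t := (t : ℕ)
  invFun x := ⟨x.val, x.val_lt⟩
  left_inv t := Fin.ext (ZMod.val_natCast_of_lt t.isLt)
  right_inv := ZMod.natCast_zmod_val

lemma natCast_fin_val_inj {t s : Fin p} : ((t : ℕ) : ZMod p) = (s : ℕ) ↔ t = s :=
  (finEquivZMod p).injective.eq_iff

lemma Zmat_pow (k : ℕ) :
    Zmat p ^ k =
      diagonal fun s : Fin p => ZMod.stdAddChar (((s : ℕ) : ZMod p) * (k : ZMod p)) := by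
  rw [Zmat, diagonal_pow]
  congr 1
  ext s
  rw [Pi.pow_apply, ← pow_mul, rootOfUnity_pow, Nat.cast_mul]

lemma Zmat_pow_congr {j k : ℕ} (h : (j : ZMod p) = k) : Zmat p ^ j = Zmat p ^ k := by
  rw [Zmat_pow, Zmat_pow, h]

lemma cphase_pow (k : ℕ) :
    cphase p ^ k = diagonal fun st : Fin p × Fin p =>
      ZMod.stdAddChar ((k : ZMod p) * ((st.1 : ℕ) : ZMod p) * ((st.2 : ℕ) : ZMod p)) := by
  rw [cphase, diagonal_pow]
  congr 1
  ext st
  rw [Pi.pow_apply, ← pow_mul, rootOfUnity_pow]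
  push_cast
  ring_nf

lemma Xmat_pow_apply (k : ℕ) (t s : Fin p) :
    (Xmat p ^ k) t s = if ((t : ℕ) : ZMod p) = ((s : ℕ) : ZMod p) + k then 1 else 0 := by
  induction k generalizing s with
  | zero =>
    simp only [pow_zero, one_apply, Nat.cast_zero, add_zero, natCast_fin_val_inj]
  | succ k ih =>
    rw [pow_succ, mul_apply]
    simp only [ih, Xmat]
    refine (Equiv.sum_comp (finEquivZMod p)
      (fun x => (if ((t : ℕ) : ZMod p) = x + k then (1 : ℂ) else 0) *
        if x = ((s : ℕ) : ZMod p) + 1 then 1 else 0)).trans ?_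
    simp [Finset.sum_ite_eq', add_assoc, add_comm (1 : ZMod p)]

lemma cphase_pow_conj_kronecker {m m' : ℕ} (hm : (m : ZMod p) + m' = 0) (a b c : ℕ) :
    cphase p ^ m * ((Xmat p ^ a) ⊗ₖ (Xmat p ^ b * Zmat p ^ c)) * cphase p ^ m'
      = ZMod.stdAddChar ((m : ZMod p) * (a : ZMod p) * (b : ZMod p)) •
          ((Xmat p ^ a * Zmat p ^ (b * m)) ⊗ₖ (Xmat p ^ b * Zmat p ^ (c + a * m))) := by
  ext ⟨t₁, t₂⟩ ⟨s₁, s₂⟩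
  simp only [cphase_pow, Zmat_pow, mul_diagonal, diagonal_mul, Matrix.smul_apply,
    kroneckerMap_apply, Xmat_pow_apply, smul_eq_mul]
  by_cases h₁ : ((t₁ : ℕ) : ZMod p) = (s₁ : ℕ) + a
  · by_cases h₂ : ((t₂ : ℕ) : ZMod p) = (s₂ : ℕ) + b
    · simp only [h₁, h₂, if_true, one_mul, ← AddChar.map_add_eq_mul]
      congr 1
      push_cast
      linear_combination ((s₁ : ℕ) : ZMod p) * ((s₂ : ℕ) : ZMod p) * hm
    · simp [h₂]
  · simp [h₁]

theorem cphase_conj_heisenberg_weyl_general (p : ℕ) (hodd : Odd p)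
    (a b n θ : ℤ) :
    ∃ c : ℂ, ‖c‖ = 1 ∧
      cphase p ^ (((θ * n : ℤ) : ZMod p)).val
          * ((Xmat p ^ ((a : ZMod p)).val) ⊗ₖ
              (Xmat p ^ ((b : ZMod p)).val * Zmat p ^ (((2 * b * n : ℤ) : ZMod p)).val))
          * cphase p ^ (((-(θ * n) : ℤ) : ZMod p)).val
        = c • ((Xmat p ^ ((a : ZMod p)).val * Zmat p ^ (((b * θ * n : ℤ) : ZMod p)).val) ⊗ₖ
            (Xmat p ^ ((b : ZMod p)).val
              * Zmat p ^ (((2 * b * n + a * θ * n : ℤ) : ZMod p)).val)) := by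
  have : NeZero p := ⟨hodd.pos.ne'⟩
  rw [cphase_pow_conj_kronecker (p := p) ?cancel]
  case cancel => simp
  exact ⟨_, norm_stdAddChar (N := p) _, by
    congr 3 <;> apply Zmat_pow_congr <;> push_cast [ZMod.natCast_zmod_val] <;> ring⟩

/-- Conjugation by powers of the control-phase maps `X^α ⊗ X^β Z^{2βn}` to
`X^α Z^{βθn} ⊗ X^β Z^{2βn + αθn}` up to a phase `c` of modulus one, all exponents mod `p`. -/
theorem cphase_conj_heisenberg_weyl (p : ℕ) (hp : p.Prime) (hodd : Odd p)
    (a b n θ : ℤ) :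
    ∃ c : ℂ, ‖c‖ = 1 ∧
      cphase p ^ (((θ * n : ℤ) : ZMod p)).val
          * ((Xmat p ^ ((a : ZMod p)).val) ⊗ₖ
              (Xmat p ^ ((b : ZMod p)).val * Zmat p ^ (((2 * b * n : ℤ) : ZMod p)).val))
          * cphase p ^ (((-(θ * n) : ℤ) : ZMod p)).val
        = c • ((Xmat p ^ ((a : ZMod p)).val * Zmat p ^ (((b * θ * n : ℤ) : ZMod p)).val) ⊗ₖ
            (Xmat p ^ ((b : ZMod p)).val
              * Zmat p ^ (((2 * b * n + a * θ * n : ℤ) : ZMod p)).val)) :=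
  cphase_conj_heisenberg_weyl_general p hodd a b n θ
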